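/- Any synchronizing n-state automaton possessing an independent set W of k words has a reset word of length not larger than (k − 1)(n + L_W + 1) − 2k·ln((k+1)/2) + ℓ_W, where L_W and ℓ_W are the maximal and minimal lengths of the words of W. -/

import Mathlib

/-- The extension of a transition function `δ : Q → A → Q` to words. -/
def run {Q A : Type*} (δ : Q → A → Q) (q : Q) (u : List A) : Q := u.foldl δ q

/-- `W` is an independent set of words with range `R`. -/
def IsIndependent {Q A : Type*} [DecidableEq Q] (δ : Q → A → Q)
    (W : Finset (List A)) (R : Finset Q) : Prop :=
  W.card = R.card ∧ ∀ s : Q, W.image (fun w => run δ s w) = R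

/-!
Put a token on every state of `R`; let `k = #R` and `n = card Q`. By independence, for every set
`S` of states and every word `y`, the words of `W` read after `y` bring on average `m = #(R ∩ S)`
tokens into `S`. If `0 < m < k` and every word of `W` brings exactly `m`, let `ρ` be the rank of
the hit matrix `([δ(q, w) ∈ S])_{w ∈ W, q ∈ Q}`. A word collapsing `R` moves the token vector off
the kernel of this matrix translated by the initial token vector, so a word `y` of length at most
`n - ρ + 1` already does, and some `y w` with `w ∈ W` brings more than `m` tokens into `S`. The
columns indexed by `R` have `m` ones each and cover all rows, and so do their complements, with
`k - m` ones, whence `ρ ≥ k / min m (k - m)`. Starting from a singleton `S ⊆ R` and pulling `S`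
back along such words until it contains `R`, then prefixing a shortest word of `W` (which maps
every state into `R`), gives a reset word of length
`ℓ + ∑_{m=1}^{k-1} (n + L + 1 - k / min m (k - m))`, and `∑_{m=1}^{k-1} 1 / min m (k - m)` is at
least `2 ln ((k + 1) / 2)`.
-/

open Finset Module Submodule

section LinearAlgebra

variable {K : Type*} [Field K]

theorem card_le_mul_finrank_of_support_card_le [DecidableEq K] {ι : Type*} [Fintype ι]
    (P : Submodule K (ι → K)) (G : Set (ι → K)) (hGP : G ⊆ P) (m : ℕ)
    (hsupp : ∀ v ∈ G, #{i | v i ≠ 0} ≤ m) (hcov : ∀ i, ∃ v ∈ G, v i ≠ 0) :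
    Fintype.card ι ≤ m * finrank K P := by
  classical
  obtain ⟨b, hbG, hspan, hli⟩ := exists_linearIndependent K G
  have : Fintype b := hli.setFinite.fintype
  have hcover : univ ⊆ b.toFinset.biUnion fun v => {i | v i ≠ 0} := by
    intro i _
    by_contra! hi
    simp only [mem_biUnion, Set.mem_toFinset, mem_filter_univ, not_exists, not_and,
      not_not] at hi
    obtain ⟨v, hvG, hvi⟩ := hcov i
    have hb : span K b ≤ LinearMap.ker (LinearMap.proj i) := span_le.2 hi
    exact hvi (hb (hspan ▸ subset_span hvG))
  calc Fintype.card ι ≤ ∑ v ∈ b.toFinset, #{i | v i ≠ 0} :=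
        (card_le_card hcover).trans card_biUnion_le
    _ ≤ #b.toFinset * m :=
        sum_le_card_nsmul _ _ _ fun v hv => hsupp v (hbG (Set.mem_toFinset.1 hv))
    _ = m * finrank K (span K b) := by rw [finrank_span_set_eq_card hli, mul_comm]
    _ ≤ m * finrank K P := by
        gcongr
        exact Submodule.finrank_mono (span_le.2 (hbG.trans hGP))

variable {M A : Type*} [AddCommGroup M] [Module K M]

variable (K)

def displacementSpan (f : List A → M) (s : ℕ) : Submodule K M :=
  span K ((fun y => f y - f []) '' {y | y.length ≤ s})

variable {K}

lemma sub_mem_displacementSpan (f : List A → M) {s : ℕ} {y : List A} (hy : y.length ≤ s) :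
    f y - f [] ∈ displacementSpan K f s :=
  subset_span ⟨y, hy, rfl⟩

lemma displacementSpan_mono (f : List A → M) {s t : ℕ} (h : s ≤ t) :
    displacementSpan K f s ≤ displacementSpan K f t :=
  span_mono (Set.image_mono fun _ hy => le_trans hy h)

variable {T : A → M →ₗ[K] M} {f : List A → M}

lemma sub_mem_displacementSpan_of_stable (hf : ∀ y a, f (y ++ [a]) = T a (f y)) {s : ℕ}
    (hstab : displacementSpan K f (s + 1) ≤ displacementSpan K f s) (y : List A) :
    f y - f [] ∈ displacementSpan K f s := by
  have hT : ∀ a, ∀ v ∈ displacementSpan K f s, T a v ∈ displacementSpan K f s := by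
    intro a v hv
    refine span_induction ?_ (by simp) (fun _ _ _ _ => by simp only [map_add]; exact add_mem)
      (fun c _ _ => by simp only [map_smul]; exact smul_mem _ c) hv
    rintro _ ⟨x, hx, rfl⟩
    have : T a (f x - f []) = (f (x ++ [a]) - f []) - (f ([] ++ [a]) - f []) := by
      rw [map_sub, hf, hf]; abel
    rw [this]
    exact hstab (sub_mem (sub_mem_displacementSpan f (by simpa using hx))
      (sub_mem_displacementSpan f (by simp)))
  induction y using List.reverseRecOn with
  | nil => simp
  | append_singleton y a ih =>
    have : f (y ++ [a]) - f [] = T a (f y - f []) + (f ([] ++ [a]) - f []) := by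
      rw [map_sub, hf, hf]; abel
    rw [this]
    exact add_mem (hT a _ ih) (hstab (sub_mem_displacementSpan f (by simp)))

/-- The spans of the displacements `f y - f []` by words of length `≤ s` increase strictly with `s`
until they stabilise, and once stable they contain every displacement. -/
theorem exists_length_le_finrank_add_one_sub_notMem [FiniteDimensional K M]
    (hf : ∀ y a, f (y ++ [a]) = T a (f y)) (P : Submodule K M) (h : ∃ y, f y - f [] ∉ P) :
    ∃ y, y.length ≤ finrank K P + 1 ∧ f y - f [] ∉ P := by
  by_contra! hshort
  obtain ⟨y, hy⟩ := h
  have hP : ∀ s ≤ finrank K P + 1, displacementSpan K f s ≤ P := fun s hs =>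
    span_le.2 (by rintro _ ⟨x, hx, rfl⟩; exact hshort x (le_trans hx hs))
  have hstrict : ∀ s ≤ finrank K P, displacementSpan K f s < displacementSpan K f (s + 1) :=
    fun s hs => (displacementSpan_mono f s.le_succ).lt_of_not_ge fun hstab =>
      hy (hP s (by omega) (sub_mem_displacementSpan_of_stable hf hstab y))
  have hgrow : ∀ s ≤ finrank K P + 1, s ≤ finrank K (displacementSpan K f s) := by
    intro s
    induction s with
    | zero => simp
    | succ s ih =>
      intro hs
      have := Submodule.finrank_lt_finrank_of_lt (hstrict s (by omega))
      omega
  have := (hgrow _ le_rfl).trans (Submodule.finrank_mono (hP _ le_rfl))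
  omega

end LinearAlgebra

lemma exists_gt_of_sum_eq_card_mul {α : Type*} {s : Finset α} {f : α → ℕ} {m : ℕ}
    (hsum : ∑ a ∈ s, f a = #s * m) (hne : ∃ a ∈ s, f a ≠ m) : ∃ a ∈ s, m < f a := by
  by_contra! hle
  obtain ⟨a, ha, hfa⟩ := hne
  have := sum_lt_sum hle ⟨a, ha, (hle a ha).lt_of_ne hfa⟩
  simp [hsum] at this

lemma log_succ_div_two_le_sum_Ico (k : ℕ) :
    Real.log ((k + 1) / 2) ≤ ∑ t ∈ Ico 1 k, 1 / ((t : ℝ) + 1) := by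
  induction k with
  | zero => simp [Real.log_nonneg]
  | succ k ih =>
    rcases k.eq_zero_or_pos with rfl | hk
    · simp
    have hstep : Real.log ((k + 1 + 1) / 2) - Real.log ((k + 1) / 2) ≤ 1 / ((k : ℝ) + 1) := by
      rw [← Real.log_div (by positivity) (by positivity)]
      refine (Real.log_le_sub_one_of_pos (by positivity)).trans (le_of_eq ?_)
      field_simp
      ring
    rw [sum_Ico_succ_top hk, Nat.cast_succ]
    linarith

/-- Each `1 / min i (k - i)` dominates the matching term `2 / (t + 1)` under the permutation
`i ↦ 2i - 1` (if `2i ≤ k`), `i ↦ 2(k - i)` (otherwise) of `[1, k)`. -/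
lemma two_mul_log_le_sum_max_inv (k : ℕ) :
    2 * Real.log ((k + 1) / 2) ≤ ∑ i ∈ Ico 1 k, max (1 / (i : ℝ)) (1 / ((k : ℝ) - i)) := by
  let σ : ℕ → ℕ := fun i => if 2 * i ≤ k then 2 * i - 1 else 2 * (k - i)
  calc 2 * Real.log ((k + 1) / 2) ≤ ∑ t ∈ Ico 1 k, 2 / ((t : ℝ) + 1) := by
        simp only [div_eq_mul_one_div (2 : ℝ), ← mul_sum]
        exact mul_le_mul_of_nonneg_left (log_succ_div_two_le_sum_Ico k) zero_le_two
    _ = ∑ i ∈ Ico 1 k, 2 / ((σ i : ℝ) + 1) := by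
        refine (sum_nbij' σ (fun t => if t % 2 = 1 then (t + 1) / 2 else k - t / 2)
          ?_ ?_ ?_ ?_ fun _ _ => rfl).symm <;>
        · intro i hi
          simp only [mem_Ico, σ] at hi ⊢
          split_ifs <;> omega
    _ ≤ _ := sum_le_sum fun i hi => by
        rw [mem_Ico] at hi
        simp only [σ]
        split_ifs with h
        · refine le_max_of_le_left (le_of_eq ?_)
          rw [Nat.cast_sub (by omega), Nat.cast_mul]
          field_simp
          ring
        · refine le_max_of_le_right ?_
          have hki : (1 : ℝ) ≤ k - i := by
            rw [le_sub_iff_add_le']; exact_mod_cast hi.2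
          rw [Nat.cast_mul, Nat.cast_sub hi.2.le, div_le_div_iff₀ (by positivity) (by linarith)]
          push_cast
          linarith

noncomputable def stepBound (n L k i : ℕ) : ℝ :=
  n + L + 1 - k * max (1 / (i : ℝ)) (1 / ((k : ℝ) - i))

lemma le_stepBound {n L k i : ℕ} (hi : 0 < i) (hik : i < k) (hkn : k ≤ n) :
    (L : ℝ) ≤ stepBound n L k i := by
  have hi' : (1 : ℝ) ≤ i := by exact_mod_cast hi
  have hki : (1 : ℝ) ≤ k - i := by rw [le_sub_iff_add_le']; exact_mod_cast hik
  have hmax : max (1 / (i : ℝ)) (1 / ((k : ℝ) - i)) ≤ 1 :=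
    max_le (div_le_one_of_le₀ hi' (by positivity)) (div_le_one_of_le₀ hki (by positivity))
  have hkn' : (k : ℝ) ≤ n := by exact_mod_cast hkn
  rw [stepBound]
  nlinarith

lemma sum_stepBound_le (n L k : ℕ) (hk : 1 ≤ k) :
    ∑ i ∈ Ico 1 k, stepBound n L k i
      ≤ ((k : ℝ) - 1) * (n + L + 1) - 2 * k * Real.log ((k + 1) / 2) := by
  simp only [stepBound]
  rw [sum_sub_distrib, sum_const, Nat.card_Ico, nsmul_eq_mul, Nat.cast_sub hk, ← mul_sum]
  have := two_mul_log_le_sum_max_inv k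
  push_cast
  nlinarith

section Automaton

variable {Q A : Type*} (δ : Q → A → Q)

lemma run_append (q : Q) (u v : List A) : run δ q (u ++ v) = run δ (run δ q u) v :=
  List.foldl_append

noncomputable def tokens (R : Finset Q) (y : List A) : Q →₀ ℝ :=
  ∑ r ∈ R, Finsupp.single (run δ r y) 1

lemma tokens_append_singleton (R : Finset Q) (y : List A) (a : A) :
    tokens δ R (y ++ [a]) = Finsupp.lmapDomain ℝ ℝ (δ · a) (tokens δ R y) := by
  simp only [tokens, map_sum, Finsupp.lmapDomain_apply, Finsupp.mapDomain_single, run_append]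
  rfl

variable [DecidableEq Q]

def hitCount (R S : Finset Q) (y : List A) : ℕ := #{r ∈ R | run δ r y ∈ S}

lemma hitCount_nil (R S : Finset Q) : hitCount δ R S [] = #(R ∩ S) := by
  rw [hitCount, ← filter_mem_eq_inter]; rfl

lemma hitCount_eq_card_inter_preimage [Fintype Q] (R S : Finset Q) (x : List A) :
    hitCount δ R S x = #(R ∩ ({q | run δ q x ∈ S} : Finset Q)) := by
  rw [hitCount, inter_filter, inter_univ]

lemma hitCount_compl [Fintype Q] (R S : Finset Q) (y : List A) :
    hitCount δ R Sᶜ y = #R - hitCount δ R S y := by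
  have := card_filter_add_card_filter_not (s := R) (p := fun r => run δ r y ∈ S)
  simp only [hitCount, mem_compl]
  omega

noncomputable def hitMap (W : Finset (List A)) (S : Finset Q) : (Q →₀ ℝ) →ₗ[ℝ] (W → ℝ) :=
  Finsupp.linearCombination ℝ fun q w => if run δ q w ∈ S then 1 else 0

lemma hitMap_single (W : Finset (List A)) (S : Finset Q) (q : Q) :
    hitMap δ W S (Finsupp.single q 1) = fun w : W => if run δ q w ∈ S then (1 : ℝ) else 0 := by
  rw [hitMap, Finsupp.linearCombination_single, one_smul]

lemma hitMap_tokens (W : Finset (List A)) (R S : Finset Q) (y : List A) (w : W) :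
    hitMap δ W S (tokens δ R y) w = hitCount δ R S (y ++ w) := by
  simp only [tokens, map_sum, hitMap_single, Finset.sum_apply, hitCount, run_append,
    sum_boole]

lemma range_hitMap_compl_le [Fintype Q] {W : Finset (List A)} {S : Finset Q}
    (hone : (fun _ => 1) ∈ LinearMap.range (hitMap δ W S)) :
    LinearMap.range (hitMap δ W Sᶜ) ≤ LinearMap.range (hitMap δ W S) := by
  rw [hitMap, Finsupp.range_linearCombination, span_le]
  rintro _ ⟨q, rfl⟩
  have : hitMap δ W Sᶜ (Finsupp.single q 1)
      = (fun _ => 1) - hitMap δ W S (Finsupp.single q 1) := by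
    ext w
    by_cases h : run δ q w ∈ S <;> simp [hitMap_single, h]
  beta_reduce
  rw [SetLike.mem_coe, ← hitMap_single, this]
  exact sub_mem hone (LinearMap.mem_range_self _ _)

lemma exists_run_mem_of_budget [Fintype Q] (R : Finset Q) (b : ℕ → ℝ)
    (hb : ∀ i, 0 < i → i < #R → 0 ≤ b i)
    (hstep : ∀ S : Finset Q, 0 < #(R ∩ S) → #(R ∩ S) < #R →
      ∃ x, #(R ∩ S) < hitCount δ R S x ∧ (x.length : ℝ) ≤ b #(R ∩ S))
    (S : Finset Q) (hS : 0 < #(R ∩ S)) :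
    ∃ y, (∀ r ∈ R, run δ r y ∈ S) ∧ (y.length : ℝ) ≤ ∑ i ∈ Ico #(R ∩ S) #R, b i := by
  induction hd : #R - #(R ∩ S) using Nat.strong_induction_on generalizing S with
  | _ d ih =>
  rcases (card_le_card inter_subset_left : #(R ∩ S) ≤ #R).lt_or_eq with hlt | heq
  · obtain ⟨x, hx, hxlen⟩ := hstep S hS hlt
    rw [hitCount_eq_card_inter_preimage] at hx
    obtain ⟨y, hy, hylen⟩ := ih _ (by omega) _ (hS.trans hx) rfl
    refine ⟨y ++ x, fun r hr => ?_, ?_⟩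
    · simpa [run_append] using hy r hr
    · have hsub : ∑ i ∈ Ico #(R ∩ ({q | run δ q x ∈ S} : Finset Q)) #R, b i
          ≤ ∑ i ∈ Ico (#(R ∩ S) + 1) #R, b i :=
        sum_le_sum_of_subset_of_nonneg (Ico_subset_Ico_left hx) fun i hi _ => by
          rw [mem_Ico] at hi; exact hb i (by omega) hi.2
      rw [List.length_append, Nat.cast_add, sum_eq_sum_Ico_succ_bot hlt]
      linarith
  · refine ⟨[], fun r hr => ?_, by simp [heq]⟩
    exact inter_eq_left.1 (eq_of_subset_of_card_le inter_subset_left heq.ge) hr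

end Automaton

namespace IsIndependent

variable {Q A : Type*} [DecidableEq Q] {δ : Q → A → Q} {W : Finset (List A)} {R : Finset Q}

lemma run_mem (hW : IsIndependent δ W R) {w : List A} (hw : w ∈ W) (q : Q) : run δ q w ∈ R := by
  rw [← hW.2 q]; exact mem_image_of_mem _ hw

lemma card_filter_run_mem (hW : IsIndependent δ W R) (q : Q) (S : Finset Q) :
    #{w ∈ W | run δ q w ∈ S} = #(R ∩ S) := by
  have hinj : Set.InjOn (run δ q ·) W := by rw [← card_image_iff, hW.2 q, hW.1]
  rw [← card_image_of_injOn (hinj.mono (filter_subset _ _)),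
    ← filter_image (p := (· ∈ S)), hW.2 q, filter_mem_eq_inter]

lemma sum_hitCount (hW : IsIndependent δ W R) (S : Finset Q) (y : List A) :
    ∑ w ∈ W, hitCount δ R S (y ++ w) = #W * #(R ∩ S) := by
  simp only [hitCount, card_filter, run_append]
  rw [sum_comm]
  simp only [← card_filter, hW.card_filter_run_mem, sum_const, smul_eq_mul, hW.1]

lemma card_le_mul_finrank_range_hitMap (hW : IsIndependent δ W R) {S : Finset Q}
    (hS : ∀ w ∈ W, 0 < hitCount δ R S w) :
    #W ≤ #(R ∩ S) * finrank ℝ (LinearMap.range (hitMap δ W S)) := by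
  have := card_le_mul_finrank_of_support_card_le (LinearMap.range (hitMap δ W S))
    ((fun q => hitMap δ W S (Finsupp.single q 1)) '' R)
    (by rintro _ ⟨q, -, rfl⟩; exact LinearMap.mem_range_self _ _) #(R ∩ S) ?_ ?_
  · rwa [Fintype.card_coe] at this
  · rintro _ ⟨q, -, rfl⟩
    simp only [hitMap_single, ne_eq, ite_eq_right_iff, one_ne_zero, imp_false, not_not]
    rw [univ_eq_attach, filter_attach (fun w => run δ q w ∈ S), card_map, card_attach,
      hW.card_filter_run_mem]
  · intro w
    obtain ⟨r, hr⟩ := card_pos.1 (hS w w.2)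
    rw [mem_filter] at hr
    exact ⟨_, ⟨r, hr.1, rfl⟩, by simp [hitMap_single, hr.2]⟩

variable [Fintype Q]

lemma exists_hitCount_gt_of_balanced (hW : IsIndependent δ W R)
    (hcol : ∃ y q, ∀ r ∈ R, run δ r y = q) {L : ℕ} (hL : ∀ w ∈ W, w.length ≤ L)
    {S : Finset Q} (hS0 : 0 < #(R ∩ S)) (hSR : #(R ∩ S) < #R)
    (hbal : ∀ w ∈ W, hitCount δ R S w = #(R ∩ S)) :
    ∃ x, #(R ∩ S) < hitCount δ R S x ∧
      x.length + finrank ℝ (LinearMap.range (hitMap δ W S)) ≤ Fintype.card Q + L + 1 := by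
  have hker : ∀ y, tokens δ R y - tokens δ R [] ∈ LinearMap.ker (hitMap δ W S) ↔
      ∀ w ∈ W, hitCount δ R S (y ++ w) = #(R ∩ S) := by
    intro y
    simp only [LinearMap.mem_ker, map_sub, sub_eq_zero, funext_iff, hitMap_tokens,
      List.nil_append, Subtype.forall, Nat.cast_inj]
    exact forall₂_congr fun w hw => by rw [hbal w hw]
  have hesc : ∃ y, tokens δ R y - tokens δ R [] ∉ LinearMap.ker (hitMap δ W S) := by
    obtain ⟨y, q, hy⟩ := hcol
    obtain ⟨w, hw⟩ : W.Nonempty := card_pos.1 (hW.1 ▸ hS0.trans hSR)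
    refine ⟨y, fun h => ?_⟩
    have hcount := (hker y).1 h w hw
    simp only [hitCount, run_append] at hcount
    by_cases hq : run δ q w ∈ S
    · rw [filter_true_of_mem fun r hr => hy r hr ▸ hq] at hcount
      omega
    · rw [filter_false_of_mem fun r hr => hy r hr ▸ hq, card_empty] at hcount
      omega
  obtain ⟨y, hylen, hy⟩ := exists_length_le_finrank_add_one_sub_notMem
    (tokens_append_singleton δ R) _ hesc
  rw [hker] at hy
  push Not at hy
  obtain ⟨w, hw, hgt⟩ := exists_gt_of_sum_eq_card_mul (hW.sum_hitCount S y) hy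
  refine ⟨y ++ w, hgt, ?_⟩
  have hrank := LinearMap.finrank_range_add_finrank_ker (hitMap δ W S)
  rw [finrank_finsupp_self] at hrank
  have := hL w hw
  rw [List.length_append]
  omega

lemma exists_hitCount_gt (hW : IsIndependent δ W R) (hcol : ∃ y q, ∀ r ∈ R, run δ r y = q)
    {L : ℕ} (hL : ∀ w ∈ W, w.length ≤ L) {S : Finset Q} (hS0 : 0 < #(R ∩ S))
    (hSR : #(R ∩ S) < #R) :
    ∃ x, #(R ∩ S) < hitCount δ R S x ∧
      (x.length : ℝ) ≤ stepBound (Fintype.card Q) L #R #(R ∩ S) := by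
  set m := #(R ∩ S)
  set k := #R
  by_cases hgt : ∃ w ∈ W, m < hitCount δ R S w
  · obtain ⟨w, hw, hmw⟩ := hgt
    refine ⟨w, hmw, le_trans ?_ (le_stepBound hS0 hSR (card_le_univ R))⟩
    exact_mod_cast hL w hw
  push Not at hgt
  have hbal : ∀ w ∈ W, hitCount δ R S w = m := by
    by_contra! hne
    obtain ⟨w, hw, hlt⟩ := exists_gt_of_sum_eq_card_mul (by simpa using hW.sum_hitCount S []) hne
    exact (hgt w hw).not_gt hlt
  obtain ⟨x, hx, hlen⟩ := hW.exists_hitCount_gt_of_balanced hcol hL hS0 hSR hbal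
  refine ⟨x, hx, ?_⟩
  set ρ := finrank ℝ (LinearMap.range (hitMap δ W S))
  have hone : (fun _ => 1) ∈ LinearMap.range (hitMap δ W S) := by
    refine ⟨(1 / (m : ℝ)) • tokens δ R [], funext fun w => ?_⟩
    rw [map_smul, Pi.smul_apply, hitMap_tokens, List.nil_append, hbal w w.2, smul_eq_mul]
    field_simp
  have hρm : k ≤ m * ρ := by
    have := hW.card_le_mul_finrank_range_hitMap fun w hw => hbal w hw ▸ hS0
    rwa [hW.1] at this
  have hρkm : k ≤ (k - m) * ρ := calc
    k = #W := hW.1.symm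
    _ ≤ #(R ∩ Sᶜ) * finrank ℝ (LinearMap.range (hitMap δ W Sᶜ)) :=
      hW.card_le_mul_finrank_range_hitMap fun w hw => by rw [hitCount_compl, hbal w hw]; omega
    _ ≤ (k - m) * ρ := Nat.mul_le_mul
      (by rw [← hitCount_nil δ, hitCount_compl, hitCount_nil])
      (Submodule.finrank_mono (range_hitMap_compl_le δ hone))
  have hρ : (k : ℝ) * max (1 / (m : ℝ)) (1 / ((k : ℝ) - m)) ≤ ρ := by
    have hm : (0 : ℝ) < m := by exact_mod_cast hS0
    have hkm : (0 : ℝ) < k - m := by rw [sub_pos]; exact_mod_cast hSR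
    rw [mul_max_of_nonneg _ _ (by positivity), mul_one_div, mul_one_div]
    refine max_le ((div_le_iff₀ hm).2 ?_) ((div_le_iff₀ hkm).2 ?_)
    · rw [mul_comm]; exact_mod_cast hρm
    · rw [mul_comm, ← Nat.cast_sub hSR.le]; exact_mod_cast hρkm
  have hlen' : (x.length : ℝ) + ρ ≤ Fintype.card Q + L + 1 := by exact_mod_cast hlen
  rw [stepBound]
  linarith

end IsIndependent

theorem stmt_9_general {Q A : Type*} [Fintype Q] [DecidableEq Q]
    (δ : Q → A → Q) (W : Finset (List A)) (R : Finset Q) (k : ℕ)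
    (hW : IsIndependent δ W R) (hk : W.card = k)
    (L : ℕ) (hLub : ∀ w ∈ W, w.length ≤ L)
    (l : ℕ) (hlmem : ∃ w ∈ W, w.length = l)
    (hsync : ∃ u : List A,
      ((Finset.univ : Finset Q).image (fun q => run δ q u)).card = 1) :
    ∃ u : List A,
      ((Finset.univ : Finset Q).image (fun q => run δ q u)).card = 1 ∧
      (u.length : ℝ) ≤ ((k : ℝ) - 1) * ((Fintype.card Q : ℝ) + (L : ℝ) + 1)
        - 2 * (k : ℝ) * Real.log (((k : ℝ) + 1) / 2) + (l : ℝ) := by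
  obtain ⟨u, hu⟩ := hsync
  obtain ⟨p, hp⟩ := card_eq_one.1 hu
  have hup : ∀ q, run δ q u = p := fun q => mem_singleton.1 (hp ▸ mem_image_of_mem _ (mem_univ q))
  obtain ⟨w, hw, rfl⟩ := hlmem
  have hRk : #R = k := hW.1 ▸ hk
  set q₀ := run δ p w
  have hcol : ∀ r ∈ R, run δ r (u ++ w) = q₀ := fun r _ => by rw [run_append, hup]
  have hq₀ : #(R ∩ {q₀}) = 1 := by rw [inter_singleton_of_mem (hW.run_mem hw p), card_singleton]
  obtain ⟨y, hy, hylen⟩ := exists_run_mem_of_budget δ R (stepBound (Fintype.card Q) L #R)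
    (fun i hi hik => (Nat.cast_nonneg L).trans (le_stepBound hi hik (card_le_univ R)))
    (fun S hS0 hSR => hW.exists_hitCount_gt ⟨_, _, hcol⟩ hLub hS0 hSR) {q₀} (by rw [hq₀]; simp)
  have hreset : ∀ q, run δ q (w ++ y) = q₀ := fun q => by
    rw [run_append]; exact mem_singleton.1 (hy _ (hW.run_mem hw q))
  refine ⟨w ++ y, ?_, ?_⟩
  · simp only [hreset, image_const ⟨p, mem_univ p⟩, card_singleton]
  · rw [hq₀, hRk] at hylen
    have := sum_stepBound_le (Fintype.card Q) L k (hk ▸ card_pos.2 ⟨w, hw⟩)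
    rw [List.length_append, Nat.cast_add]
    linarith

/-- Any synchronizing `n`-state automaton with an independent set `W` of `k` words
has a reset word of length `≤ (k − 1)(n + L_W + 1) − 2k·ln((k+1)/2) + ℓ_W`. -/
theorem stmt_9 {Q A : Type*} [Fintype Q] [DecidableEq Q] [Fintype A]
    (δ : Q → A → Q) (W : Finset (List A)) (R : Finset Q) (k : ℕ)
    (hW : IsIndependent δ W R) (hk : W.card = k)
    (L : ℕ) (hLub : ∀ w ∈ W, w.length ≤ L) (hLmem : ∃ w ∈ W, w.length = L)
    (l : ℕ) (hlb : ∀ w ∈ W, l ≤ w.length) (hlmem : ∃ w ∈ W, w.length = l)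
    (hsync : ∃ u : List A,
      ((Finset.univ : Finset Q).image (fun q => run δ q u)).card = 1) :
    ∃ u : List A,
      ((Finset.univ : Finset Q).image (fun q => run δ q u)).card = 1 ∧
      (u.length : ℝ) ≤ ((k : ℝ) - 1) * ((Fintype.card Q : ℝ) + (L : ℝ) + 1)
        - 2 * (k : ℝ) * Real.log (((k : ℝ) + 1) / 2) + (l : ℝ) :=
  stmt_9_general δ W R k hW hk L hLub l hlmem hsync
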